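/- Let $I \subset [0,1]$ and let $D(I) = \{ (m-1+f)/m \mid m \in \mathbb{Z}_{>0},\ f \in I_+ \}$. Then $I$ satisfies the DCC if and only if $D(I)$ satisfies the DCC. -/

import Mathlib

def SatisfiesDCC (S : Set ℝ) : Prop :=
  ¬ ∃ f : ℕ → ℝ, (∀ n, f n ∈ S) ∧ ∀ n, f (n + 1) < f n

def SatisfiesACC (S : Set ℝ) : Prop :=
  ¬ ∃ f : ℕ → ℝ, (∀ n, f n ∈ S) ∧ ∀ n, f n < f (n + 1)

def IPlus (I : Set ℝ) : Set ℝ :=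
  {0} ∪ {j | j ∈ Set.Icc (0 : ℝ) 1 ∧
    ∃ l : List ℝ, l ≠ [] ∧ (∀ x ∈ l, x ∈ I) ∧ l.sum = j}

def DSet (I : Set ℝ) : Set ℝ :=
  {a | ∃ m : ℕ, 0 < m ∧ ∃ f ∈ IPlus I, a = (m - 1 + f) / m}

/-! If `I` satisfies the DCC, so does the additive monoid it generates (Higman), hence so does
`I₊`. An element `(m - 1 + f) / m ≤ c < 1` of `D(I)` forces `1 / m ≥ 1 - c`, so below any
`c < 1` the set `D(I)` is a finite union of monotone images of `I₊`, and a descending sequence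
in `D(I)` lies below its second term, which is `< 1`. -/

open Set

theorem satisfiesDCC_iff_isWF (S : Set ℝ) : SatisfiesDCC S ↔ S.IsWF := by
  rw [isWF_iff_no_descending_seq]
  constructor
  · exact fun h f hf hmem => h ⟨f, hmem, fun n => hf n.lt_succ_self⟩
  · exact fun h ⟨f, hmem, hf⟩ => h f (strictAnti_nat_of_succ_lt hf) hmem

theorem Set.IsWF.of_inter_Iic {α : Type*} [LinearOrder α] {S : Set α} {b : α}
    (hS : S ⊆ Iic b) (h : ∀ c < b, (S ∩ Iic c).IsWF) : S.IsWF := by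
  rw [isWF_iff_no_descending_seq]
  intro f hf hmem
  have htail := isWF_iff_no_descending_seq.1 (h (f 1) ((hf zero_lt_one).trans_le (hS (hmem 0))))
  exact htail (f ∘ Nat.succ) (hf.comp_strictMono fun _ _ => Nat.succ_lt_succ)
    fun n => ⟨hmem _, hf.antitone (Nat.le_add_left 1 n)⟩

theorem IPlus_subset_Icc (I : Set ℝ) : IPlus I ⊆ Icc 0 1 := by
  rintro x (rfl | ⟨hx, -⟩)
  · exact ⟨le_rfl, zero_le_one⟩
  · exact hx

theorem IPlus_subset_addSubmonoidClosure (I : Set ℝ) :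
    IPlus I ⊆ AddSubmonoid.closure I := by
  rintro x (rfl | ⟨-, l, -, hl, rfl⟩)
  · exact zero_mem _
  · exact AddSubmonoid.list_sum_mem _ fun y hy => AddSubmonoid.subset_closure (hl y hy)

theorem isPWO_IPlus {I : Set ℝ} (hI : ∀ x ∈ I, 0 ≤ x) (hWF : I.IsWF) : (IPlus I).IsPWO :=
  (hWF.isPWO.addSubmonoid_closure hI).mono (IPlus_subset_addSubmonoidClosure I)

theorem subset_DSet {I : Set ℝ} (hI : I ⊆ Icc 0 1) : I ⊆ DSet I := by
  intro x hx
  refine ⟨1, one_pos, x, Or.inr ⟨hI hx, [x], List.cons_ne_nil _ _, ?_, List.sum_singleton⟩, ?_⟩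
  · simpa using hx
  · norm_num

theorem DSet_subset_Iic_one (I : Set ℝ) : DSet I ⊆ Iic 1 := by
  rintro a ⟨m, hm, f, hf, rfl⟩
  have hm' : (0 : ℝ) < m := Nat.cast_pos.2 hm
  rw [mem_Iic, div_le_one hm']
  linarith [(IPlus_subset_Icc I hf).2]

theorem natCast_le_inv_one_sub_of_div_le {m : ℕ} (hm : 0 < m) {f c : ℝ} (hf : 0 ≤ f)
    (hc : c < 1) (hac : ((m : ℝ) - 1 + f) / m ≤ c) : (m : ℝ) ≤ (1 - c)⁻¹ := by
  have hm' : (0 : ℝ) < m := Nat.cast_pos.2 hm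
  rw [div_le_iff₀ hm'] at hac
  rw [le_inv_comm₀ hm' (sub_pos.2 hc), ← one_div, le_div_iff₀ hm']
  linarith

theorem DSet_inter_Iic_subset (I : Set ℝ) {c : ℝ} (hc : c < 1) :
    DSet I ∩ Iic c ⊆
      ⋃ k ∈ Finset.Icc 1 ⌈(1 - c)⁻¹⌉₊, (fun x : ℝ => ((k : ℝ) - 1 + x) / k) '' IPlus I := by
  rintro a ⟨⟨m, hm, f, hf, rfl⟩, hac⟩
  have hm_le : (m : ℝ) ≤ (1 - c)⁻¹ :=
    natCast_le_inv_one_sub_of_div_le hm (IPlus_subset_Icc I hf).1 hc hac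
  have hmk : m ≤ ⌈(1 - c)⁻¹⌉₊ := Nat.cast_le.1 (hm_le.trans (Nat.le_ceil _))
  exact mem_biUnion (Finset.mem_Icc.2 ⟨hm, hmk⟩) ⟨f, hf, rfl⟩

theorem isWF_DSet {I : Set ℝ} (hI : ∀ x ∈ I, 0 ≤ x) (hWF : I.IsWF) : (DSet I).IsWF := by
  refine IsWF.of_inter_Iic (DSet_subset_Iic_one I) fun c hc => ?_
  refine IsPWO.isWF (IsPWO.mono ?_ (DSet_inter_Iic_subset I hc))
  refine (Finset.partiallyWellOrderedOn_bUnion _).2 fun k hk => ?_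
  have hk0 : (0 : ℝ) < k := Nat.cast_pos.2 (Finset.mem_Icc.1 hk).1
  exact (isPWO_IPlus hI hWF).image_of_monotone fun x y hxy => by gcongr

theorem dcc_iff_dcc_DSet (I : Set ℝ) (hI : I ⊆ Set.Icc 0 1) :
    SatisfiesDCC I ↔ SatisfiesDCC (DSet I) := by
  rw [satisfiesDCC_iff_isWF, satisfiesDCC_iff_isWF]
  exact ⟨isWF_DSet fun x hx => (hI hx).1, fun h => h.mono (subset_DSet hI)⟩
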